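/- For every deterministic synchronous two-client protocol in the NoDelegation append model that satisfies liveness (in the crash-free execution both r_A is eventually appended to DLO_A and r_B is eventually appended to DLO_B), there exists a crash pattern in which exactly one client has a finite crash time (the other never crashes) such that in the resulting execution exactly one of the two records is ever appended; hence safety is violated and no such protocol solves Collaborative 2-AtomicAppends when one client may crash. -/
import Mathlib


/-!
STATEMENT 2. For every deterministic synchronous two-client protocol in the NoDelegation
append model that satisfies liveness (in the crash-free execution both r_A is eventually
appended to DLO_A and r_B is eventually appended to DLO_B), there exists a crash pattern
in which exactly one client has a finite crash time (the other never crashes) such that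
in the resulting execution exactly one of the two records is ever appended; hence safety
is violated and no such protocol solves Collaborative 2-AtomicAppends when one client
may crash.

Modeling: clients proceed in lockstep rounds; in each round a non-crashed client performs
at most one action: stay idle, send a message (received by the other client at the start
of the next round), or append its own record to its own ledger (NoDelegation: this is the
only append available to it, and it takes effect in that round).  A deterministic protocol
maps a client's local history — the list whose `i`-th entry is the (optional) message
received at the start of round `i+1`, i.e. sent by the other client in round `i` — to its
action.  A crash pattern assigns each client a crash time in `ℕ∞ = ℕ ∪ {∞}`; a client
performs no actions from its crash round onward.  Since the append is idempotent and only
client X ever appends r_X, "r_X is ever in DLO_X" is equivalent to X performing the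
append action in some round.
-/

/-- The two clients. -/
inductive Client where
  | A
  | B
deriving DecidableEq

/-- The other client. -/
def Client.other : Client → Client
  | .A => .B
  | .B => .A

/-- Actions available in a round under NoDelegation: idle, send a message, or
append one's own record to one's own ledger. -/
inductive NDAct (M : Type) where
  | idle : NDAct M
  | send : M → NDAct M
  | appendOwn : NDAct M

/-- The message (if any) that client `Y`, with local history `h` and crash time `cr Y`,
sends in round `t`. -/
def sentMsg {M : Type} (P : Client → List (Option M) → NDAct M) (cr : Client → ℕ∞)
    (h : List (Option M)) (t : ℕ) (Y : Client) : Option M :=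
  if (t : ℕ∞) < cr Y then
    match P Y h with
    | NDAct.send m => some m
    | _ => none
  else none

/-- The local history of each client at the beginning of round `t` in the (deterministic)
execution of protocol `P` under crash pattern `cr`: the list of messages received so far. -/
def histories {M : Type} (P : Client → List (Option M) → NDAct M) (cr : Client → ℕ∞) :
    ℕ → Client → List (Option M)
  | 0, _ => []
  | t + 1, X =>
      histories P cr t X ++ [sentMsg P cr (histories P cr t X.other) t X.other]

/-- Client `X` performs its append in round `t` of the execution of `P` under `cr`. -/
def appendsAt {M : Type} (P : Client → List (Option M) → NDAct M) (cr : Client → ℕ∞)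
    (t : ℕ) (X : Client) : Prop :=
  (t : ℕ∞) < cr X ∧ P X (histories P cr t X) = NDAct.appendOwn

/-- Record r_X is ever appended to DLO_X in the execution of `P` under `cr`. -/
def recordAppended {M : Type} (P : Client → List (Option M) → NDAct M)
    (cr : Client → ℕ∞) (X : Client) : Prop :=
  ∃ t : ℕ, appendsAt P cr t X


lemma Client.other_other (X : Client) : X.other.other = X := by cases X <;> rfl

lemma Client.other_ne (X : Client) : X.other ≠ X := by cases X <;> simp [Client.other]

/-- Crash pattern where only `X` crashes, at time `a`. -/
def crOf (X : Client) (a : ℕ) : Client → ℕ∞ := fun Y => if Y = X then (a : ℕ∞) else ⊤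

lemma hist_eq {M : Type} (P : Client → List (Option M) → NDAct M) (X : Client) (a : ℕ) :
    ∀ t, t ≤ a → ∀ Y, histories P (crOf X a) t Y = histories P (fun _ => ⊤) t Y := by
  intro t
  induction t with
  | zero => intro _ Y; rfl
  | succ t ih =>
    intro ht Y
    have ht' : t ≤ a := Nat.le_of_succ_le ht
    simp only [histories]
    rw [ih ht' Y, ih ht' Y.other]
    congr 1
    unfold sentMsg crOf
    by_cases hx : Y.other = X
    · have h1 : (t : ℕ∞) < (a : ℕ∞) := by
        exact_mod_cast Nat.lt_of_succ_le ht
      have h2 : (t : ℕ∞) < ⊤ := lt_of_lt_of_le h1 le_top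
      simp [hx, h1, h2]
    · simp [hx]

lemma main_case {M : Type} (P : Client → List (Option M) → NDAct M) (X : Client) (a : ℕ)
    (hX : appendsAt P (fun _ => (⊤ : ℕ∞)) a X)
    (hother : ∀ s < a, ¬ appendsAt P (fun _ => (⊤ : ℕ∞)) s X.other) :
    ∃ cr : Client → ℕ∞,
      (∃ Z : Client, cr Z ≠ ⊤ ∧ cr Z.other = ⊤) ∧
      recordAppended P cr X ∧ ¬ recordAppended P cr X.other := by
  refine ⟨crOf X.other a, ⟨X.other, ?_, ?_⟩, ⟨a, ?_, ?_⟩, ?_⟩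
  · simp only [crOf, if_pos rfl]
    exact (WithTop.natCast_lt_top a).ne
  · simp only [crOf, Client.other_other]
    rw [if_neg (Client.other_ne X).symm]
  · simp only [crOf]
    rw [if_neg (fun h => Client.other_ne X h.symm)]
    exact WithTop.natCast_lt_top a
  · rw [hist_eq P X.other a a le_rfl X]
    exact hX.2
  · rintro ⟨t, hlt, happ⟩
    rw [crOf, if_pos rfl] at hlt
    have hta : t < a := by exact_mod_cast hlt
    rw [hist_eq P X.other a t hta.le X.other] at happ
    exact hother t hta ⟨WithTop.natCast_lt_top t, happ⟩

theorem no_delegation_one_crash_impossibility {M : Type}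
    (P : Client → List (Option M) → NDAct M)
    -- liveness in the crash-free execution: both records are eventually appended
    (h_live : recordAppended P (fun _ => (⊤ : ℕ∞)) Client.A ∧
              recordAppended P (fun _ => (⊤ : ℕ∞)) Client.B) :
    ∃ cr : Client → ℕ∞,
      -- exactly one client has a finite crash time, the other never crashes
      (∃ X : Client, cr X ≠ ⊤ ∧ cr X.other = ⊤) ∧
      -- in the resulting execution exactly one of the two records is ever appended
      ((recordAppended P cr Client.A ∧ ¬ recordAppended P cr Client.B) ∨
       (¬ recordAppended P cr Client.A ∧ recordAppended P cr Client.B)) := by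
  classical
  obtain ⟨hA, hB⟩ := h_live
  set tA := Nat.find hA with htA
  set tB := Nat.find hB with htB
  rcases le_total tA tB with hle | hle
  · -- A appends first; crash B at time tA
    obtain ⟨cr, hcr, h1, h2⟩ := main_case P Client.A tA (Nat.find_spec hA)
      (fun s hs h => Nat.find_min hB (lt_of_lt_of_le hs hle) h)
    exact ⟨cr, hcr, Or.inl ⟨h1, h2⟩⟩
  · obtain ⟨cr, hcr, h1, h2⟩ := main_case P Client.B tB (Nat.find_spec hB)
      (fun s hs h => Nat.find_min hA (lt_of_lt_of_le hs hle) h)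
    exact ⟨cr, hcr, Or.inr ⟨h2, h1⟩⟩
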